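/- arXiv:1411.3233 — 3 statements merged into one kernel-verified Lean document; each statement's English description precedes it below -/
import Mathlib

section
/- Let s ∈ S, z ∈ I_* with sz < z, and y ∈ W. Then: (i) (u+1)X^z_y = −u X^{sz}_y + X^{sz}_{ys} if sz = zs* and ys > y; (ii) (u+1)X^z_y = u² X^{sz}_{ys} + (u²−u−1) X^{sz}_y if sz = zs* and ys < y; (iii) X^z_y = X^{szs*}_{ys} if sz ≠ zs* and ys > y; (iv) X^z_y = u² X^{szs*}_{ys} + (u²−1) X^{szs*}_y if sz ≠ zs* and ys < y. -/
/-!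
Parts (i) and (ii) come from the recursion 1.2(i) for the twisted involution `sz`, for which
`s(sz) = z > sz`, and parts (iii) and (iv) from 1.2(iii) for `szs*`, each read at `ys` or at `y`
and, in the cases `ys < y`, combined with 1.2(ii) resp. 1.2(iv) for `z` itself.

The one point needing Coxeter theory is that `szs* < sz` when `sz ≠ zs*`. Since `*` preserves
length and `z* = z⁻¹`, `ℓ(zs*) = ℓ(sz)`; if `ℓ(szs*) ≥ ℓ(zs*)`, then with `v = sz` we would have
`sv > v` and `svs* < vs*`, and the exchange condition forces `sv = vs*`, i.e. `sz = zs*`.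
The exchange condition is obtained from Tits' sign cocycle: `s` acts on `W × {±1}` by
`(t, ε) ↦ (sts, -ε if t = s else ε)`, which respects the braid relations because the left
inversion sequence of the word `(ab)^m`, `m = m(a, b)`, is periodic with period `m`. Hence the
parity of the number of occurrences of `t` in the left inversion sequence of a word depends only
on the product of the word.
-/

open Polynomial
open scoped Classical

/-- The characterization (Proposition 1.2) of the polynomials `X^z_y ∈ ℤ[u]`, indexed by pairs
`(z, y)` with `z` a twisted involution (`st z = z⁻¹`) and `y ∈ W`: `X^z_1 = δ_{z,1}`, and for
`s ∈ S`, `y > ys`, the recursions 1.2(i)–(iv) hold. -/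
def XRec {B W : Type} [Group W] {M : CoxeterMatrix B} (cs : CoxeterSystem M W)
    (st : W ≃* W) (P : {z : W // st z = z⁻¹} → W → Polynomial ℤ) : Prop :=
  (∀ z : {z : W // st z = z⁻¹}, P z 1 = if z.1 = 1 then 1 else 0) ∧
  ∀ (i : B) (y : W), cs.length (y * cs.simple i) < cs.length y →
    ∀ z : {z : W // st z = z⁻¹},
      (cs.simple i * z.1 = z.1 * st (cs.simple i) →
        cs.length z.1 < cs.length (cs.simple i * z.1) →
        ∀ h : st (cs.simple i * z.1) = (cs.simple i * z.1)⁻¹,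
          P z y = X * P z (y * cs.simple i) +
            (X + 1) * P ⟨cs.simple i * z.1, h⟩ (y * cs.simple i)) ∧
      (cs.simple i * z.1 = z.1 * st (cs.simple i) →
        cs.length (cs.simple i * z.1) < cs.length z.1 →
        ∀ h : st (cs.simple i * z.1) = (cs.simple i * z.1)⁻¹,
          P z y = (X ^ 2 - X - 1) * P z (y * cs.simple i) +
            (X ^ 2 - X) * P ⟨cs.simple i * z.1, h⟩ (y * cs.simple i)) ∧
      (cs.simple i * z.1 ≠ z.1 * st (cs.simple i) →
        cs.length z.1 < cs.length (cs.simple i * z.1) →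
        ∀ h : st (cs.simple i * z.1 * st (cs.simple i)) =
            (cs.simple i * z.1 * st (cs.simple i))⁻¹,
          P z y = P ⟨cs.simple i * z.1 * st (cs.simple i), h⟩ (y * cs.simple i)) ∧
      (cs.simple i * z.1 ≠ z.1 * st (cs.simple i) →
        cs.length (cs.simple i * z.1) < cs.length z.1 →
        ∀ h : st (cs.simple i * z.1 * st (cs.simple i)) =
            (cs.simple i * z.1 * st (cs.simple i))⁻¹,
          P z y = (X ^ 2 - 1) * P z (y * cs.simple i) +
            X ^ 2 * P ⟨cs.simple i * z.1 * st (cs.simple i), h⟩ (y * cs.simple i))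

namespace CoxeterSystem

variable {B W : Type*} [Group W] {M : CoxeterMatrix B} (cs : CoxeterSystem M W)

local prefix:100 "s " => cs.simple
local prefix:100 "π " => cs.wordProd
local prefix:100 "ℓ " => cs.length
local prefix:100 "lis " => cs.leftInvSeq

theorem conj_simple_involutive (i : B) : Function.Involutive (MulAut.conj (s i)) := fun t => by
  rw [← MulAut.mul_apply, ← map_mul, cs.simple_mul_simple_self, map_one, MulAut.one_apply]

theorem conj_simple_eq_simple_iff (i : B) {t : W} : MulAut.conj (s i) t = s i ↔ t = s i :=
  (MulAut.conj (s i)).injective.eq_iff' (by simp)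

noncomputable def reflectionPerm (i : B) : Equiv.Perm (W × ℤˣ) :=
  Function.Involutive.toPerm
    (fun p => (MulAut.conj (s i) p.1, if p.1 = s i then -p.2 else p.2)) <| by
      rintro ⟨t, ε⟩
      simp only [cs.conj_simple_eq_simple_iff, cs.conj_simple_involutive i t]
      split_ifs <;> simp

theorem reflectionPerm_apply (i : B) (t : W) (ε : ℤˣ) :
    cs.reflectionPerm i (t, ε) = (MulAut.conj (s i) t, if t = s i then -ε else ε) := rfl

theorem prod_map_reflectionPerm_apply (ω : List B) (t : W) (ε : ℤˣ) :
    (ω.map cs.reflectionPerm).prod (t, ε) =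
      (MulAut.conj (π ω) t, (-1) ^ (lis ω).count (MulAut.conj (π ω) t) * ε) := by
  induction ω with
  | nil => simp
  | cons i ω ih =>
    set u := MulAut.conj (π ω) t
    have hu : MulAut.conj (π (i :: ω)) t = MulAut.conj (s i) u := by
      rw [wordProd_cons, map_mul, MulAut.mul_apply]
    rw [List.map_cons, List.prod_cons, Equiv.Perm.mul_apply, ih, reflectionPerm_apply, hu,
      leftInvSeq, List.count_cons, List.count_map_of_injective _ _ (MulAut.conj (s i)).injective]
    simp only [beq_iff_eq, eq_comm (a := s i), cs.conj_simple_eq_simple_iff]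
    by_cases hus : u = s i <;> simp [hus, pow_succ]

theorem even_count_leftInvSeq_braid (a b : B) (t : W) :
    Even ((lis (alternatingWord a b (2 * M a b))).count t) := by
  set l := lis (alternatingWord a b (2 * M a b))
  have hlen : l.length = 2 * M a b := by simp [l]
  have hperiodic : l.drop (M a b) = l.take (M a b) := by
    refine List.ext_getElem (by simp [hlen]; omega) fun k hk _ => ?_
    simp only [List.getElem_drop, List.getElem_take, l]
    rw [getElem_leftInvSeq_alternatingWord _ _ _ _ _ (by simp at hk; omega),
      getElem_leftInvSeq_alternatingWord _ _ _ _ _ (by simp at hk; omega),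
      prod_alternatingWord_eq_mul_pow, prod_alternatingWord_eq_mul_pow]
    simp [show ∀ n, (2 * n + 1) / 2 = n by omega, pow_add]
  rw [← List.take_append_drop (M a b) l, hperiodic, List.count_append]
  exact ⟨_, rfl⟩

theorem prod_map_alternatingWord_two_mul {G : Type*} [Monoid G] (f : B → G) (a b : B) (k : ℕ) :
    ((alternatingWord a b (2 * k)).map f).prod = (f a * f b) ^ k := by
  induction k with
  | zero => simp [alternatingWord]
  | succ k ih =>
    rw [show 2 * (k + 1) = 2 * k + 1 + 1 by ring, alternatingWord_succ', alternatingWord_succ']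
    simp [ih, pow_succ', mul_assoc]

theorem isLiftable_reflectionPerm : M.IsLiftable cs.reflectionPerm := fun a b => by
  ext ⟨t, ε⟩ : 1
  have hbraid : π (alternatingWord a b (2 * M a b)) = 1 := by
    simp [prod_alternatingWord_eq_mul_pow, cs.simple_mul_simple_pow]
  rw [← prod_map_alternatingWord_two_mul, prod_map_reflectionPerm_apply, hbraid, map_one,
    MulAut.one_apply, (cs.even_count_leftInvSeq_braid a b t).neg_one_pow, one_mul]
  rfl

noncomputable def reflectionRep : W →* Equiv.Perm (W × ℤˣ) :=
  cs.lift ⟨cs.reflectionPerm, cs.isLiftable_reflectionPerm⟩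

theorem reflectionRep_wordProd (ω : List B) :
    cs.reflectionRep (π ω) = (ω.map cs.reflectionPerm).prod := by
  simp [reflectionRep, wordProd, map_list_prod, Function.comp_def, lift_apply_simple]

theorem neg_one_pow_count_leftInvSeq_eq {ω ω' : List B} (h : π ω = π ω') (t : W) :
    (-1 : ℤˣ) ^ (lis ω).count t = (-1) ^ (lis ω').count t := by
  set t' := MulAut.conj (π ω)⁻¹ t
  have ht : MulAut.conj (π ω) t' = t := by simp [t', mul_assoc]
  have ht' : MulAut.conj (π ω') t' = t := h ▸ ht
  have key := congrArg (fun w => (cs.reflectionRep w (t', 1)).2) h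
  simpa only [reflectionRep_wordProd, prod_map_reflectionPerm_apply, ht, ht', mul_one] using key

theorem simple_mem_leftInvSeq_of_isLeftDescent {ω : List B} {i : B}
    (hi : cs.IsLeftDescent (π ω) i) : s i ∈ lis ω := by
  obtain ⟨η, hη, hηω⟩ := cs.exists_isReduced (s i * π ω)
  have hprod : π (i :: η) = π ω := by rw [wordProd_cons, ← hηω, simple_mul_simple_cancel_left]
  have hnot : s i ∉ lis η := fun hmem => by
    have := (cs.isLeftInversion_of_mem_leftInvSeq hη hmem).2
    rw [← hηω, simple_mul_simple_cancel_left] at this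
    exact lt_asymm hi this
  have hcount : (lis (i :: η)).count (s i) = 1 := by
    have hconj := List.count_map_of_injective (lis η) _ (MulAut.conj (s i)).injective (s i)
    rw [show MulAut.conj (s i) (s i) = s i by simp] at hconj
    rw [leftInvSeq, List.count_cons, hconj, List.count_eq_zero.mpr hnot]
    simp
  have hparity := cs.neg_one_pow_count_leftInvSeq_eq hprod (s i)
  rw [hcount] at hparity
  by_contra hmem
  rw [List.count_eq_zero.mpr hmem] at hparity
  exact absurd hparity (by decide)

theorem simple_mul_eq_mul_simple_of_isLeftDescent_mul_simple {v : W} {i j : B}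
    (hi : ¬cs.IsLeftDescent v i) (h : cs.IsLeftDescent (v * s j) i) : s i * v = v * s j := by
  obtain ⟨ω, hω, rfl⟩ := cs.exists_isReduced v
  have hmem := cs.simple_mem_leftInvSeq_of_isLeftDescent (ω := ω.concat j)
    (by rwa [wordProd_concat])
  rw [leftInvSeq_concat, List.concat_eq_append, List.mem_append, List.mem_singleton] at hmem
  rcases hmem with hmem | heq
  · exact absurd (cs.isLeftInversion_of_mem_leftInvSeq hω hmem).2 hi
  · rw [heq]; group

section SimplePreserving

variable {F : Type*} [FunLike F W W] [MonoidHomClass F W W] (φ : F)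

theorem length_apply_wordProd_le (hφ : ∀ i, ∃ j, φ (s i) = s j) (ω : List B) :
    ℓ (φ (π ω)) ≤ ω.length := by
  induction ω with
  | nil => simp
  | cons i ω ih =>
    obtain ⟨j, hj⟩ := hφ i
    rw [wordProd_cons, map_mul, hj, List.length_cons]
    exact (cs.length_mul_le _ _).trans (by rw [length_simple]; omega)

theorem length_apply_le (hφ : ∀ i, ∃ j, φ (s i) = s j) (w : W) : ℓ (φ w) ≤ ℓ w := by
  obtain ⟨ω, hω, rfl⟩ := cs.exists_isReduced w
  exact hω.eq ▸ cs.length_apply_wordProd_le φ hφ ω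

theorem length_apply_eq (hinv : ∀ w, φ (φ w) = w) (hφ : ∀ i, ∃ j, φ (s i) = s j) (w : W) :
    ℓ (φ w) = ℓ w :=
  le_antisymm (cs.length_apply_le φ hφ w) (by simpa [hinv] using cs.length_apply_le φ hφ (φ w))

theorem mul_apply_simple_mul_apply_simple (w : W) (i : B) : w * φ (s i) * φ (s i) = w := by
  rw [mul_assoc, ← map_mul, simple_mul_simple_self, map_one, mul_one]

theorem length_simple_mul_mul_lt (hinv : ∀ w, φ (φ w) = w) (hφ : ∀ i, ∃ j, φ (s i) = s j)
    {z : W} (hz : φ z = z⁻¹) {i : B} (hlt : ℓ (s i * z) < ℓ z) (hne : s i * z ≠ z * φ (s i)) :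
    ℓ (s i * z * φ (s i)) < ℓ (z * φ (s i)) := by
  obtain ⟨j, hj⟩ := hφ i
  rw [hj] at hne ⊢
  have hlen : ℓ (z * s j) = ℓ (s i * z) := by
    have hφz : φ (s i * z) = (z * s j)⁻¹ := by rw [map_mul, hj, hz, mul_inv_rev, inv_simple]
    rw [← cs.length_inv, ← hφz, cs.length_apply_eq φ hinv hφ]
  by_contra! hge
  refine hne (mul_right_cancel (b := s j) ?_)
  rw [simple_mul_simple_cancel_right]
  nth_rewrite 2 [← cs.simple_mul_simple_cancel_left (w := z) i]
  refine (cs.simple_mul_eq_mul_simple_of_isLeftDescent_mul_simple ?_ ?_).symm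
  · rw [IsLeftDescent, simple_mul_simple_cancel_left]; omega
  · have := cs.length_mul_simple_ne (s i * z) j
    rw [IsLeftDescent, ← mul_assoc, simple_mul_simple_cancel_left]; omega

end SimplePreserving

end CoxeterSystem

open CoxeterSystem

section XRec

variable {B W : Type} [Group W] {M : CoxeterMatrix B} {cs : CoxeterSystem M W} {st : W ≃* W}
  {P : {z : W // st z = z⁻¹} → W → Polynomial ℤ}

local prefix:100 "s " => cs.simple
local prefix:100 "ℓ " => cs.length

theorem XRec.apply_simple_mul (hP : XRec cs st P) {i : B} {z : {z : W // st z = z⁻¹}}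
    (hlt : ℓ (s i * z.1) < ℓ z.1) (hcomm : s i * z.1 = z.1 * st (s i))
    (h : st (s i * z.1) = (s i * z.1)⁻¹) {y : W} (hy : ℓ (y * s i) < ℓ y) :
    P ⟨s i * z.1, h⟩ y = X * P ⟨s i * z.1, h⟩ (y * s i) + (X + 1) * P z (y * s i) := by
  have hcomm' : s i * (s i * z.1) = s i * z.1 * st (s i) := by
    rw [simple_mul_simple_cancel_left, hcomm, cs.mul_apply_simple_mul_apply_simple]
  have := (hP.2 i y hy ⟨s i * z.1, h⟩).1 hcomm' (by rwa [simple_mul_simple_cancel_left])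
    (by simpa only [simple_mul_simple_cancel_left] using z.2)
  simpa only [simple_mul_simple_cancel_left] using this

theorem XRec.apply_simple_mul_mul (hP : XRec cs st P) (hinv : ∀ w, st (st w) = w)
    (hS : ∀ i, ∃ j, st (s i) = s j) {i : B} {z : {z : W // st z = z⁻¹}}
    (hlt : ℓ (s i * z.1) < ℓ z.1) (hne : s i * z.1 ≠ z.1 * st (s i))
    (h : st (s i * z.1 * st (s i)) = (s i * z.1 * st (s i))⁻¹) {y : W}
    (hy : ℓ (y * s i) < ℓ y) :
    P ⟨s i * z.1 * st (s i), h⟩ y = P z (y * s i) := by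
  have hback : s i * (s i * z.1 * st (s i)) * st (s i) = z.1 := by
    rw [← mul_assoc, simple_mul_simple_cancel_left, cs.mul_apply_simple_mul_apply_simple]
  have hne' : s i * (s i * z.1 * st (s i)) ≠ s i * z.1 * st (s i) * st (s i) := by
    rwa [← mul_assoc, simple_mul_simple_cancel_left, cs.mul_apply_simple_mul_apply_simple,
      ne_comm]
  have hlt' : ℓ (s i * z.1 * st (s i)) < ℓ (s i * (s i * z.1 * st (s i))) := by
    rw [← mul_assoc, simple_mul_simple_cancel_left]
    exact cs.length_simple_mul_mul_lt st hinv hS z.2 hlt hne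
  have := (hP.2 i y hy ⟨s i * z.1 * st (s i), h⟩).2.2.1 hne' hlt'
    (by dsimp only; rw [hback]; exact z.2)
  simpa only [hback] using this

end XRec

theorem statement9_general {B W : Type} [Group W] {M : CoxeterMatrix B}
    (cs : CoxeterSystem M W) (st : W ≃* W)
    (hst_inv : ∀ w, st (st w) = w)
    (hst_S : ∀ i : B, ∃ j : B, st (cs.simple i) = cs.simple j)
    (P : {z : W // st z = z⁻¹} → W → Polynomial ℤ) (hP : XRec cs st P)
    (i : B) (z : {z : W // st z = z⁻¹})
    (hlt : cs.length (cs.simple i * z.1) < cs.length z.1) (y : W) :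
    (cs.simple i * z.1 = z.1 * st (cs.simple i) →
      cs.length y < cs.length (y * cs.simple i) →
      ∀ h : st (cs.simple i * z.1) = (cs.simple i * z.1)⁻¹,
        (X + 1) * P z y = -X * P ⟨cs.simple i * z.1, h⟩ y +
          P ⟨cs.simple i * z.1, h⟩ (y * cs.simple i)) ∧
    (cs.simple i * z.1 = z.1 * st (cs.simple i) →
      cs.length (y * cs.simple i) < cs.length y →
      ∀ h : st (cs.simple i * z.1) = (cs.simple i * z.1)⁻¹,
        (X + 1) * P z y = X ^ 2 * P ⟨cs.simple i * z.1, h⟩ (y * cs.simple i) +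
          (X ^ 2 - X - 1) * P ⟨cs.simple i * z.1, h⟩ y) ∧
    (cs.simple i * z.1 ≠ z.1 * st (cs.simple i) →
      cs.length y < cs.length (y * cs.simple i) →
      ∀ h : st (cs.simple i * z.1 * st (cs.simple i)) =
          (cs.simple i * z.1 * st (cs.simple i))⁻¹,
        P z y = P ⟨cs.simple i * z.1 * st (cs.simple i), h⟩ (y * cs.simple i)) ∧
    (cs.simple i * z.1 ≠ z.1 * st (cs.simple i) →
      cs.length (y * cs.simple i) < cs.length y →
      ∀ h : st (cs.simple i * z.1 * st (cs.simple i)) =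
          (cs.simple i * z.1 * st (cs.simple i))⁻¹,
        P z y = X ^ 2 * P ⟨cs.simple i * z.1 * st (cs.simple i), h⟩ (y * cs.simple i) +
          (X ^ 2 - 1) * P ⟨cs.simple i * z.1 * st (cs.simple i), h⟩ y) := by
  have hys (hy : cs.length y < cs.length (y * cs.simple i)) :
      cs.length (y * cs.simple i * cs.simple i) < cs.length (y * cs.simple i) := by
    rwa [simple_mul_simple_cancel_right]
  refine ⟨fun hcomm hy h => ?_, fun hcomm hy h => ?_, fun hne hy h => ?_, fun hne hy h => ?_⟩
  · have := hP.apply_simple_mul hlt hcomm h (hys hy)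
    rw [simple_mul_simple_cancel_right] at this
    linear_combination -this
  · linear_combination (X + 1) * (hP.2 i y hy z).2.1 hcomm hlt h -
      (X ^ 2 - X - 1) * hP.apply_simple_mul hlt hcomm h hy
  · have := hP.apply_simple_mul_mul hst_inv hst_S hlt hne h (hys hy)
    rw [simple_mul_simple_cancel_right] at this
    exact this.symm
  · linear_combination (hP.2 i y hy z).2.2.2 hne hlt h -
      (X ^ 2 - 1) * hP.apply_simple_mul_mul hst_inv hst_S hlt hne h hy

/-- **Proposition 1.4.** Let `s ∈ S`, `z ∈ I_*` with `sz < z`, and `y ∈ W`.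
Then the identities 1.4(i)–(iv) hold. -/
theorem statement9 {B W : Type} [Group W] [Finite B] {M : CoxeterMatrix B}
    (cs : CoxeterSystem M W) (st : W ≃* W)
    (hst_inv : ∀ w, st (st w) = w)
    (hst_S : ∀ i : B, ∃ j : B, st (cs.simple i) = cs.simple j)
    (P : {z : W // st z = z⁻¹} → W → Polynomial ℤ) (hP : XRec cs st P)
    (i : B) (z : {z : W // st z = z⁻¹})
    (hlt : cs.length (cs.simple i * z.1) < cs.length z.1) (y : W) :
    (cs.simple i * z.1 = z.1 * st (cs.simple i) →
      cs.length y < cs.length (y * cs.simple i) →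
      ∀ h : st (cs.simple i * z.1) = (cs.simple i * z.1)⁻¹,
        (X + 1) * P z y = -X * P ⟨cs.simple i * z.1, h⟩ y +
          P ⟨cs.simple i * z.1, h⟩ (y * cs.simple i)) ∧
    (cs.simple i * z.1 = z.1 * st (cs.simple i) →
      cs.length (y * cs.simple i) < cs.length y →
      ∀ h : st (cs.simple i * z.1) = (cs.simple i * z.1)⁻¹,
        (X + 1) * P z y = X ^ 2 * P ⟨cs.simple i * z.1, h⟩ (y * cs.simple i) +
          (X ^ 2 - X - 1) * P ⟨cs.simple i * z.1, h⟩ y) ∧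
    (cs.simple i * z.1 ≠ z.1 * st (cs.simple i) →
      cs.length y < cs.length (y * cs.simple i) →
      ∀ h : st (cs.simple i * z.1 * st (cs.simple i)) =
          (cs.simple i * z.1 * st (cs.simple i))⁻¹,
        P z y = P ⟨cs.simple i * z.1 * st (cs.simple i), h⟩ (y * cs.simple i)) ∧
    (cs.simple i * z.1 ≠ z.1 * st (cs.simple i) →
      cs.length (y * cs.simple i) < cs.length y →
      ∀ h : st (cs.simple i * z.1 * st (cs.simple i)) =
          (cs.simple i * z.1 * st (cs.simple i))⁻¹,
        P z y = X ^ 2 * P ⟨cs.simple i * z.1 * st (cs.simple i), h⟩ (y * cs.simple i) +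
          (X ^ 2 - 1) * P ⟨cs.simple i * z.1 * st (cs.simple i), h⟩ y) :=
  statement9_general cs st hst_inv hst_S P hP i z hlt y
end

section
/- Let z ∈ I_*, y ∈ W, s ∈ S. Then: (i) X^z_y + X^z_{ys} = u²(X^{szs*}_y + X^{szs*}_{ys}) if sz ≠ zs* and sz < z; (ii) (u+1)(X^z_y + X^z_{ys}) = (u²−u)(X^{sz}_y + X^{sz}_{ys}) if sz = zs* and sz < z. -/
open Polynomial
open scoped Classical

/-!
For `y > ys`, each identity comes from writing the recursion 1.2 once at `z` and once at its
partner (`s z s*` in case (i), `s z` in case (ii)) and eliminating; the case `y < ys` follows by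
exchanging `y` and `ys`. The one piece of Coxeter theory needed is that in case (i) the partner
`z' = s z s*` satisfies `z' < s z' = z s*`, i.e. `ℓ(s z s*) = ℓ(z) - 2`. Since
`(z s*)⁻¹ = (s z)*`, `s*` is a right descent of `z`, and this is the lifting property: if
`s w < w` and `w t < w` for simple `s, t`, then `s w = w t` or `ℓ(s w t) = ℓ(w) - 2`. It follows
from the exchange condition, which we prove in the classical way: the simple reflections act on
`W × {±1}` by `(t, ε) ↦ (s t s, ±ε)`, with the sign flipped iff `t = s`; these involutions satisfy
the Coxeter relations, and the sign part of the action of `π ω` counts the occurrences of `t` in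
the right inversion sequence of `ω` modulo `2`.
-/

section SignFlip

variable {G : Type*} [Group G]

theorem mul_mul_mul_mul_of_mul_self_eq_one {a : G} (ha : a * a = 1) (x : G) :
    a * (a * x * a) * a = x := by
  rw [← mul_assoc, ← mul_assoc, ha, one_mul, mul_assoc, ha, mul_one]

theorem mul_mul_eq_iff_of_mul_self_eq_one {a : G} (ha : a * a = 1) (x y : G) :
    a * x * a = y ↔ x = a * y * a := by
  constructor <;> rintro rfl <;> rw [mul_mul_mul_mul_of_mul_self_eq_one ha]

noncomputable def signFlip (a : G) (p : G × ℤˣ) : G × ℤˣ :=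
  (a * p.1 * a, (if p.1 = a then -1 else 1) * p.2)

theorem signFlip_involutive {a : G} (ha : a * a = 1) : Function.Involutive (signFlip a) := by
  rintro ⟨t, ε⟩
  have hfix : a * t * a = a ↔ t = a := by
    rw [mul_mul_eq_iff_of_mul_self_eq_one ha, ha, one_mul]
  simp only [signFlip, mul_mul_mul_mul_of_mul_self_eq_one ha, hfix]
  split_ifs <;> simp

theorem mul_mul_pow_eq_inv_mul {a b : G} (ha : a * a = 1) (hb : b * b = 1) (k : ℕ) :
    b * (a * b) ^ k = ((a * b) ^ k)⁻¹ * b := by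
  have hconj : b * (a * b) * b⁻¹ = (a * b)⁻¹ := by
    rw [mul_inv_rev, inv_eq_of_mul_eq_one_right ha, inv_eq_of_mul_eq_one_right hb, mul_assoc b,
      mul_assoc, hb, mul_one]
  calc b * (a * b) ^ k = (b * (a * b) * b⁻¹) ^ k * b := by rw [conj_pow]; group
    _ = ((a * b) ^ k)⁻¹ * b := by rw [hconj, inv_pow]

theorem iterate_signFlip_comp_signFlip {a b : G} (ha : a * a = 1) (hb : b * b = 1) (k : ℕ)
    (t : G) (ε : ℤˣ) :
    (signFlip a ∘ signFlip b)^[k] (t, ε) =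
      ((a * b) ^ k * t * ((a * b) ^ k)⁻¹,
        (∏ n ∈ Finset.range (2 * k), if (a * b) ^ n * t = b then -1 else 1) * ε) := by
  set p := a * b with hp
  have hconj (j m : ℕ) : p ^ m * t * (p ^ j)⁻¹ = b ↔ p ^ (j + m) * t = b := by
    rw [mul_inv_eq_iff_eq_mul, mul_mul_pow_eq_inv_mul ha hb, eq_inv_mul_iff_mul_eq, pow_add,
      mul_assoc]
  have hpinv : p⁻¹ = b * a := by
    rw [hp, mul_inv_rev, inv_eq_of_mul_eq_one_right ha, inv_eq_of_mul_eq_one_right hb]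
  induction k with
  | zero => simp
  | succ k ih =>
    have hsecond : b * (p ^ k * t * (p ^ k)⁻¹) * b = a ↔ p ^ (k + (k + 1)) * t = b := by
      rw [mul_mul_eq_iff_of_mul_self_eq_one hb, ← hpinv, eq_inv_mul_iff_mul_eq, ← mul_assoc,
        ← mul_assoc, ← pow_succ', hconj]
    rw [Function.iterate_succ_apply', ih]
    simp only [Function.comp_apply, signFlip, hconj k k, hsecond, Prod.mk.injEq]
    refine ⟨by rw [pow_succ', mul_inv_rev, hpinv]; simp only [hp, mul_assoc], ?_⟩
    rw [show 2 * (k + 1) = k + k + 1 + 1 by ring, Finset.prod_range_succ, Finset.prod_range_succ,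
      two_mul]
    ac_rfl

theorem iterate_signFlip_comp_signFlip_eq_id {a b : G} (ha : a * a = 1) (hb : b * b = 1) {m : ℕ}
    (hm : (a * b) ^ m = 1) : (signFlip a ∘ signFlip b)^[m] = id := by
  funext ⟨t, ε⟩
  rw [iterate_signFlip_comp_signFlip ha hb, hm, inv_one, one_mul, mul_one, two_mul,
    Finset.prod_range_add]
  -- the sign runs twice through one period of `n ↦ (a * b) ^ n`, so it is a square
  simp only [pow_add, hm, one_mul, Int.units_mul_self, id]

end SignFlip

namespace CoxeterSystem

variable {B W : Type*} [Group W] {M : CoxeterMatrix B} (cs : CoxeterSystem M W)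

local prefix:100 "s " => cs.simple
local prefix:100 "π " => cs.wordProd
local prefix:100 "ℓ " => cs.length
local prefix:100 "ris " => cs.rightInvSeq

theorem isLiftable_signFlip :
    M.IsLiftable fun i => (signFlip_involutive (cs.simple_mul_simple_self i)).toPerm := by
  intro i j
  apply Equiv.coe_fn_injective
  dsimp only
  rw [Equiv.Perm.coe_pow, Equiv.Perm.coe_mul, Function.Involutive.coe_toPerm,
    Function.Involutive.coe_toPerm, Equiv.Perm.coe_one]
  exact iterate_signFlip_comp_signFlip_eq_id (cs.simple_mul_simple_self i)
    (cs.simple_mul_simple_self j) (cs.simple_mul_simple_pow i j)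

noncomputable def signFlipRep : W →* Equiv.Perm (W × ℤˣ) :=
  cs.lift ⟨_, cs.isLiftable_signFlip⟩

theorem signFlipRep_wordProd (ω : List B) (t : W) (ε : ℤˣ) :
    cs.signFlipRep (π ω) (t, ε) = (π ω * t * (π ω)⁻¹, (-1) ^ (ris ω).count t * ε) := by
  induction ω with
  | nil => simp
  | cons i ω ih =>
    rw [wordProd_cons, map_mul, Equiv.Perm.mul_apply, ih, signFlipRep, lift_apply_simple,
      Function.Involutive.coe_toPerm, signFlip, rightInvSeq, List.count_cons]
    have hfix : π ω * t * (π ω)⁻¹ = s i ↔ (π ω)⁻¹ * s i * π ω = t := by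
      constructor <;> intro h <;> rw [← h] <;> group
    dsimp only
    rw [hfix]
    simp only [beq_iff_eq, mul_inv_rev, inv_simple, mul_assoc]
    split_ifs <;> simp [pow_succ]

theorem neg_one_pow_count_rightInvSeq_eq {ω ω' : List B} (h : π ω = π ω') (t : W) :
    (-1 : ℤˣ) ^ (ris ω).count t = (-1) ^ (ris ω').count t := by
  have hsign := cs.signFlipRep_wordProd ω t 1
  rw [h, cs.signFlipRep_wordProd ω' t 1, Prod.mk.injEq] at hsign
  simpa using hsign.2.symm

theorem simple_mem_rightInvSeq_of_isRightDescent {ω : List B} {i : B}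
    (hi : cs.IsRightDescent (π ω) i) : s i ∈ ris ω := by
  obtain ⟨γ, hγ, hγω⟩ := cs.exists_isReduced (π ω * s i)
  have hprod : π (γ.concat i) = π ω := by
    rw [wordProd_concat, ← hγω, simple_mul_simple_cancel_right]
  have hred : cs.IsReduced (γ.concat i) := by
    rw [IsReduced, hprod, List.length_concat, ← hγ.eq, ← hγω, (cs.isRightDescent_iff).mp hi]
  have hmem : s i ∈ ris (γ.concat i) := by
    rw [rightInvSeq_concat, List.concat_eq_append]
    exact List.mem_concat_self
  have hodd := cs.neg_one_pow_count_rightInvSeq_eq hprod (s i)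
  rw [List.count_eq_one_of_mem hred.nodup_rightInvSeq hmem, pow_one] at hodd
  by_contra hnot
  rw [List.count_eq_zero_of_not_mem hnot] at hodd
  exact absurd hodd (by decide)

theorem exists_wordProd_mul_simple_eq_eraseIdx {ω : List B} {i : B}
    (hi : cs.IsRightDescent (π ω) i) : ∃ k < ω.length, π ω * s i = π (ω.eraseIdx k) := by
  obtain ⟨k, hk, hks⟩ := List.mem_iff_getElem.mp (cs.simple_mem_rightInvSeq_of_isRightDescent hi)
  refine ⟨k, by simpa using hk, ?_⟩
  rw [← hks, ← List.getD_eq_getElem _ 1 hk, wordProd_mul_getD_rightInvSeq]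

theorem eq_or_length_simple_mul_mul_simple_add_two {w : W} {i j : B}
    (hi : cs.IsLeftDescent w i) (hj : cs.IsRightDescent w j) :
    s i * w = w * s j ∨ ℓ (s i * w * s j) + 2 = ℓ w := by
  obtain ⟨γ, hγ, hγw⟩ := cs.exists_isReduced (s i * w)
  have hw : w = π (i :: γ) := by rw [wordProd_cons, ← hγw, simple_mul_simple_cancel_left]
  have hlen : ℓ w = γ.length + 1 := by rw [← hγ.eq, ← hγw, (cs.isLeftDescent_iff).mp hi]
  rw [hw] at hj
  obtain ⟨k, hk, hks⟩ := cs.exists_wordProd_mul_simple_eq_eraseIdx hj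
  rw [← hw] at hks
  rcases k with _ | k
  · left
    rw [hks, hγw, List.eraseIdx_cons_zero]
  · right
    rw [List.eraseIdx_cons_succ, wordProd_cons] at hks
    have hshort : ℓ (s i * w * s j) ≤ γ.length - 1 := by
      rw [mul_assoc, hks, simple_mul_simple_cancel_left,
        ← List.length_eraseIdx_of_lt (by simpa using hk)]
      exact cs.length_wordProd_le _
    have hlong : ℓ (s i * w) ≤ ℓ (s i * w * s j) + 1 := by
      have := cs.length_mul_simple (s i * w * s j) j
      rw [simple_mul_simple_cancel_right] at this
      omega
    have := (cs.isLeftDescent_iff).mp hi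
    simp only [List.length_cons] at hk
    omega

theorem length_map_le {B' W' : Type*} [Group W'] {M' : CoxeterMatrix B'}
    (cs' : CoxeterSystem M' W') (f : W →* W') (hf : ∀ i, ∃ j, f (s i) = cs'.simple j) (w : W) :
    cs'.length (f w) ≤ ℓ w := by
  suffices h : ∀ ω, cs'.length (f (π ω)) ≤ ω.length by
    obtain ⟨ω, hω, rfl⟩ := cs.exists_isReduced w
    exact hω.eq ▸ h ω
  intro ω
  induction ω with
  | nil => simp
  | cons i ω ih =>
    obtain ⟨j, hj⟩ := hf i
    rw [wordProd_cons, map_mul, hj, List.length_cons]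
    have := cs'.length_mul_le (cs'.simple j) (f (π ω))
    rw [cs'.length_simple] at this
    omega

theorem length_map_of_involutive (f : W →* W) (hf_inv : ∀ w, f (f w) = w)
    (hf : ∀ i, ∃ j, f (s i) = s j) (w : W) : ℓ (f w) = ℓ w := by
  refine le_antisymm (cs.length_map_le cs f hf w) ?_
  simpa [hf_inv] using cs.length_map_le cs f hf (f w)

theorem forall_of_isRightDescent {p : W → Prop} (i : B) (hswap : ∀ y, p (y * s i) → p y)
    (hdesc : ∀ y, cs.IsRightDescent y i → p y) : ∀ y, p y := by
  intro y
  by_cases hy : cs.IsRightDescent y i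
  · exact hdesc y hy
  · refine hswap y (hdesc _ ?_)
    rwa [isRightDescent_iff_not_isRightDescent_mul, simple_mul_simple_cancel_right]

theorem length_mul_apply_simple {st : W ≃* W} (hst_inv : ∀ w, st (st w) = w)
    (hst_S : ∀ i, ∃ j, st (s i) = s j) {z : W} (hz : st z = z⁻¹) (i : B) :
    ℓ (z * st (s i)) = ℓ (s i * z) :=
  calc ℓ (z * st (s i))
    _ = ℓ (st (z * st (s i))) := (cs.length_map_of_involutive st.toMonoidHom hst_inv hst_S _).symm
    _ = ℓ ((s i * z)⁻¹) := by rw [map_mul, hst_inv, hz, mul_inv_rev, inv_simple]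
    _ = ℓ (s i * z) := cs.length_inv _

theorem length_simple_mul_mul_apply_simple_lt {st : W ≃* W} (hst_inv : ∀ w, st (st w) = w)
    (hst_S : ∀ i, ∃ j, st (s i) = s j) {z : W} (hz : st z = z⁻¹) {i : B}
    (hne : s i * z ≠ z * st (s i)) (hi : cs.IsLeftDescent z i) :
    ℓ (s i * z * st (s i)) < ℓ (z * st (s i)) := by
  have hlen := cs.length_mul_apply_simple hst_inv hst_S hz i
  obtain ⟨j, hj⟩ := hst_S i
  rw [hj] at hne hlen ⊢
  have hdesc := (cs.isLeftDescent_iff).mp hi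
  have hj' : cs.IsRightDescent z j := by rw [IsRightDescent, hlen]; exact hi
  rcases cs.eq_or_length_simple_mul_mul_simple_add_two hi hj' with h | h
  · exact absurd h hne
  · omega

end CoxeterSystem

namespace XRec

variable {B W : Type} [Group W] {M : CoxeterMatrix B} {cs : CoxeterSystem M W} {st : W ≃* W}
  {P : {z : W // st z = z⁻¹} → W → ℤ[X]}

theorem add_mul_simple_eq_of_ne (hP : XRec cs st P) (hst_inv : ∀ w, st (st w) = w)
    (hst_S : ∀ i, ∃ j, st (cs.simple i) = cs.simple j) (z : {z : W // st z = z⁻¹}) (i : B)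
    (hne : cs.simple i * z.1 ≠ z.1 * st (cs.simple i)) (hi : cs.IsLeftDescent z.1 i)
    (h : st (cs.simple i * z.1 * st (cs.simple i)) = (cs.simple i * z.1 * st (cs.simple i))⁻¹)
    (y : W) :
    P z y + P z (y * cs.simple i) =
      X ^ 2 * (P ⟨_, h⟩ y + P ⟨_, h⟩ (y * cs.simple i)) := by
  revert y
  refine cs.forall_of_isRightDescent i (fun y hy => ?_) (fun y hy => ?_)
  · rw [cs.simple_mul_simple_cancel_right] at hy
    linear_combination hy
  set z' : {z : W // st z = z⁻¹} := ⟨_, h⟩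
  have hss : st (cs.simple i) * st (cs.simple i) = 1 := by
    rw [← map_mul, cs.simple_mul_simple_self, map_one]
  have hsz' : cs.simple i * z'.1 = z.1 * st (cs.simple i) := by
    simp only [z', mul_assoc, cs.simple_mul_simple_cancel_left]
  have hz's : z'.1 * st (cs.simple i) = cs.simple i * z.1 := by
    simp only [z', mul_assoc, hss, mul_one]
  have hback : cs.simple i * z'.1 * st (cs.simple i) = z.1 := by
    rw [hsz', mul_assoc, hss, mul_one]
  have hz : (⟨_, hback ▸ z.2⟩ : {z : W // st z = z⁻¹}) = z := Subtype.ext hback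
  have hrec := (hP.2 i y hy z).2.2.2 hne hi h
  have hrec' := (hP.2 i y hy z').2.2.1 (by rw [hsz', hz's]; exact hne.symm)
    (by rw [hsz']; exact cs.length_simple_mul_mul_apply_simple_lt hst_inv hst_S z.2 hne hi)
    (hback ▸ z.2)
  rw [hz] at hrec'
  rw [hrec, hrec']
  ring

theorem add_mul_simple_eq_of_eq (hP : XRec cs st P) (z : {z : W // st z = z⁻¹}) (i : B)
    (heq : cs.simple i * z.1 = z.1 * st (cs.simple i)) (hi : cs.IsLeftDescent z.1 i)
    (h : st (cs.simple i * z.1) = (cs.simple i * z.1)⁻¹) (y : W) :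
    (X + 1) * (P z y + P z (y * cs.simple i)) =
      (X ^ 2 - X) * (P ⟨_, h⟩ y + P ⟨_, h⟩ (y * cs.simple i)) := by
  revert y
  refine cs.forall_of_isRightDescent i (fun y hy => ?_) (fun y hy => ?_)
  · rw [cs.simple_mul_simple_cancel_right] at hy
    linear_combination hy
  set z' : {z : W // st z = z⁻¹} := ⟨_, h⟩
  have hback : cs.simple i * z'.1 = z.1 := cs.simple_mul_simple_cancel_left i
  have hz : (⟨_, hback ▸ z.2⟩ : {z : W // st z = z⁻¹}) = z := Subtype.ext hback
  have heq' : cs.simple i * z'.1 = z'.1 * st (cs.simple i) := by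
    rw [hback, mul_assoc, ← heq, cs.simple_mul_simple_cancel_left]
  have hrec := (hP.2 i y hy z).2.1 heq hi h
  have hrec' := (hP.2 i y hy z').1 heq' (by rw [hback]; exact hi) (hback ▸ z.2)
  rw [hz] at hrec'
  rw [hrec, hrec']
  ring

end XRec

theorem statement10_general {B W : Type} [Group W] {M : CoxeterMatrix B}
    (cs : CoxeterSystem M W) (st : W ≃* W)
    (hst_inv : ∀ w, st (st w) = w)
    (hst_S : ∀ i : B, ∃ j : B, st (cs.simple i) = cs.simple j)
    (P : {z : W // st z = z⁻¹} → W → Polynomial ℤ) (hP : XRec cs st P)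
    (z : {z : W // st z = z⁻¹}) (y : W) (i : B) :
    (cs.simple i * z.1 ≠ z.1 * st (cs.simple i) →
      cs.length (cs.simple i * z.1) < cs.length z.1 →
      ∀ h : st (cs.simple i * z.1 * st (cs.simple i)) =
          (cs.simple i * z.1 * st (cs.simple i))⁻¹,
        P z y + P z (y * cs.simple i) =
          X ^ 2 * (P ⟨cs.simple i * z.1 * st (cs.simple i), h⟩ y +
            P ⟨cs.simple i * z.1 * st (cs.simple i), h⟩ (y * cs.simple i))) ∧
    (cs.simple i * z.1 = z.1 * st (cs.simple i) →
      cs.length (cs.simple i * z.1) < cs.length z.1 →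
      ∀ h : st (cs.simple i * z.1) = (cs.simple i * z.1)⁻¹,
        (X + 1) * (P z y + P z (y * cs.simple i)) =
          (X ^ 2 - X) * (P ⟨cs.simple i * z.1, h⟩ y +
            P ⟨cs.simple i * z.1, h⟩ (y * cs.simple i))) :=
  ⟨fun hne hi h => hP.add_mul_simple_eq_of_ne hst_inv hst_S z i hne hi h y,
    fun heq hi h => hP.add_mul_simple_eq_of_eq z i heq hi h y⟩

/-- **Corollary 1.5.** Let `z ∈ I_*`, `y ∈ W`, `s ∈ S`.  Then:
(i) `X^z_y + X^z_{ys} = u²(X^{szs*}_y + X^{szs*}_{ys})` if `sz ≠ zs*` and `sz < z`;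
(ii) `(u+1)(X^z_y + X^z_{ys}) = (u²−u)(X^{sz}_y + X^{sz}_{ys})` if `sz = zs*` and `sz < z`. -/
theorem statement10 {B W : Type} [Group W] [Finite B] {M : CoxeterMatrix B}
    (cs : CoxeterSystem M W) (st : W ≃* W)
    (hst_inv : ∀ w, st (st w) = w)
    (hst_S : ∀ i : B, ∃ j : B, st (cs.simple i) = cs.simple j)
    (P : {z : W // st z = z⁻¹} → W → Polynomial ℤ) (hP : XRec cs st P)
    (z : {z : W // st z = z⁻¹}) (y : W) (i : B) :
    (cs.simple i * z.1 ≠ z.1 * st (cs.simple i) →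
      cs.length (cs.simple i * z.1) < cs.length z.1 →
      ∀ h : st (cs.simple i * z.1 * st (cs.simple i)) =
          (cs.simple i * z.1 * st (cs.simple i))⁻¹,
        P z y + P z (y * cs.simple i) =
          X ^ 2 * (P ⟨cs.simple i * z.1 * st (cs.simple i), h⟩ y +
            P ⟨cs.simple i * z.1 * st (cs.simple i), h⟩ (y * cs.simple i))) ∧
    (cs.simple i * z.1 = z.1 * st (cs.simple i) →
      cs.length (cs.simple i * z.1) < cs.length z.1 →
      ∀ h : st (cs.simple i * z.1) = (cs.simple i * z.1)⁻¹,
        (X + 1) * (P z y + P z (y * cs.simple i)) =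
          (X ^ 2 - X) * (P ⟨cs.simple i * z.1, h⟩ y +
            P ⟨cs.simple i * z.1, h⟩ (y * cs.simple i))) :=
  statement10_general cs st hst_inv hst_S P hP z y i
end

section
/- Write T_y a_1 = Σ_z c^z_y a_z in the Lusztig–Vogan module M and T_y T_{y*⁻¹} = Σ_w d^w T_w in the Hecke algebra H. For any z ∈ I_* and y ∈ W, if c^z_y ≠ 0 then the coefficient of T_z in T_y T_{y*⁻¹} is nonzero. -/
open LaurentPolynomial

/-- The Lusztig–Vogan formulas 1.1(i)–(iv) for the action of the generators `T_s` of the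
Iwahori–Hecke algebra (with parameter `u²`) on the free `ℤ[u,u⁻¹]`-module with basis
`a_z` indexed by the twisted involutions `z` (`st z = z⁻¹`). -/
def LVFormulas {B W : Type} [Group W] {M : CoxeterMatrix B} (cs : CoxeterSystem M W)
    (st : W ≃* W) {Mo : Type} [AddCommGroup Mo] [Module (LaurentPolynomial ℤ) Mo]
    (a : {w : W // st w = w⁻¹} → Mo)
    (Ts : B → Mo →ₗ[LaurentPolynomial ℤ] Mo) : Prop :=
  ∀ (i : B) (z : {w : W // st w = w⁻¹}),
    (cs.simple i * z.1 = z.1 * st (cs.simple i) →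
      cs.length z.1 < cs.length (cs.simple i * z.1) →
      ∀ h : st (cs.simple i * z.1) = (cs.simple i * z.1)⁻¹,
        Ts i (a z) = (T 1 : LaurentPolynomial ℤ) • a z + ((T 1 + 1 : LaurentPolynomial ℤ)) • a ⟨cs.simple i * z.1, h⟩) ∧
    (cs.simple i * z.1 = z.1 * st (cs.simple i) →
      cs.length (cs.simple i * z.1) < cs.length z.1 →
      ∀ h : st (cs.simple i * z.1) = (cs.simple i * z.1)⁻¹,
        Ts i (a z) = ((T 1 ^ 2 - T 1 - 1 : LaurentPolynomial ℤ)) • a z + ((T 1 ^ 2 - T 1 : LaurentPolynomial ℤ)) • a ⟨cs.simple i * z.1, h⟩) ∧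
    (cs.simple i * z.1 ≠ z.1 * st (cs.simple i) →
      cs.length z.1 < cs.length (cs.simple i * z.1) →
      ∀ h : st (cs.simple i * z.1 * st (cs.simple i)) =
          (cs.simple i * z.1 * st (cs.simple i))⁻¹,
        Ts i (a z) = a ⟨cs.simple i * z.1 * st (cs.simple i), h⟩) ∧
    (cs.simple i * z.1 ≠ z.1 * st (cs.simple i) →
      cs.length (cs.simple i * z.1) < cs.length z.1 →
      ∀ h : st (cs.simple i * z.1 * st (cs.simple i)) =
          (cs.simple i * z.1 * st (cs.simple i))⁻¹,
        Ts i (a z) = ((T 1 ^ 2 - 1 : LaurentPolynomial ℤ)) • a z + ((T 1 ^ 2 : LaurentPolynomial ℤ)) • a ⟨cs.simple i * z.1 * st (cs.simple i), h⟩)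

/-!
Specialise the Hecke parameter at `u = 2`. The structure constants of `T_s T_w` in the basis
`(T_w)` are `1`, `u² - 1` and `u²`, so by induction every product `T_x T_w` has all its nonzero
coordinates positive at `u = 2`. Multiplying such a product by `T_s` on the left and `T_t` on
the right therefore causes no cancellation: `T_{w₂}` occurs in `T_s (T_x T_w) T_t` as soon as
some `T_v` occurs in `T_x T_w` and `T_{w₂}` occurs in `T_s T_v T_t`.

Induct on `ℓ(y)`, writing `y = s y'` with `ℓ(y) = ℓ(y') + 1`, so that
`T_y a_1 = T_s (T_{y'} a_1)` and `T_y T_{y*⁻¹} = T_s (T_{y'} T_{y'*⁻¹}) T_{s*}`. A check of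
the four formulas 1.1(i)–(iv) shows that whenever `a_{z'}` occurs in `T_s a_z`, `T_{z'}`
occurs in `T_s T_z T_{s*}`; this is the only input from the module `M`.
-/

section PosCoords

variable {R S V ι : Type*} [Semiring R] [Semiring S] [PartialOrder S] [AddCommMonoid V]
  [Module R V]

theorem Module.Basis.repr_map_apply_eq_sum (bb : Module.Basis ι R V) (F : V →ₗ[R] V) (x : V)
    (j : ι) : bb.repr (F x) j = (bb.repr x).sum fun i c => c * bb.repr (F (bb i)) j := by
  conv_lhs => rw [← bb.linearCombination_repr x, Finsupp.linearCombination_apply]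
  simp only [map_finsuppSum, map_smul, Finsupp.sum_apply, Finsupp.smul_apply, smul_eq_mul]

theorem Module.Basis.exists_repr_ne_zero_of_repr_map_ne_zero (bb : Module.Basis ι R V)
    {F : V →ₗ[R] V} {x : V} {j : ι} (h : bb.repr (F x) j ≠ 0) :
    ∃ i, bb.repr x i ≠ 0 ∧ bb.repr (F (bb i)) j ≠ 0 := by
  rw [bb.repr_map_apply_eq_sum] at h
  obtain ⟨i, -, hi⟩ := Finset.exists_ne_zero_of_sum_ne_zero h
  exact ⟨i, left_ne_zero_of_mul hi, right_ne_zero_of_mul hi⟩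

theorem Module.Basis.eq_of_repr_self_ne_zero (bb : Module.Basis ι R V) {i k : ι}
    (h : bb.repr (bb i) k ≠ 0) : i = k := by
  classical
  by_contra hik
  simp [hik] at h

theorem Module.Basis.eq_or_eq_of_repr_smul_add_smul_ne_zero (bb : Module.Basis ι R V)
    {c₁ c₂ : R} {i j k : ι} (h : bb.repr (c₁ • bb i + c₂ • bb j) k ≠ 0) :
    i = k ∨ j = k := by
  classical
  by_contra! hk
  simp [hk.1, hk.2] at h

def PosCoords (φ : R →+* S) (bb : Module.Basis ι R V) (x : V) : Prop :=
  ∀ i, bb.repr x i ≠ 0 → 0 < φ (bb.repr x i)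

variable {φ : R →+* S} {bb : Module.Basis ι R V}

theorem PosCoords.nonneg {x : V} (hx : PosCoords φ bb x) (i : ι) : 0 ≤ φ (bb.repr x i) := by
  by_cases h : bb.repr x i = 0
  · rw [h, map_zero]
  · exact (hx i h).le

variable [IsStrictOrderedRing S]

theorem posCoords_basis (i : ι) : PosCoords φ bb (bb i) := by
  classical
  intro k hk
  rw [bb.eq_of_repr_self_ne_zero hk, bb.repr_self, Finsupp.single_eq_same, map_one]
  exact one_pos

theorem posCoords_smul_add_smul {c₁ c₂ : R} (h₁ : 0 < φ c₁) (h₂ : 0 < φ c₂)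
    (i j : ι) : PosCoords φ bb (c₁ • bb i + c₂ • bb j) := by
  classical
  intro k hk
  simp only [map_add, map_smul, bb.repr_self, Finsupp.add_apply, Finsupp.smul_apply,
    Finsupp.single_apply, smul_eq_mul] at hk ⊢
  split_ifs at hk ⊢ <;> simp_all [add_pos]

section map

variable {F : V →ₗ[R] V} {x : V} (hF : ∀ i, PosCoords φ bb (F (bb i)))
  (hx : PosCoords φ bb x)
include hF hx

theorem PosCoords.mul_le_repr_map (i j : ι) :
    φ (bb.repr x i) * φ (bb.repr (F (bb i)) j) ≤ φ (bb.repr (F x) j) := by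
  classical
  have hterm : ∀ k, 0 ≤ φ (bb.repr x k) * φ (bb.repr (F (bb k)) j) :=
    fun k => mul_nonneg (hx.nonneg k) ((hF k).nonneg j)
  rw [bb.repr_map_apply_eq_sum F x, Finsupp.sum, map_sum]
  simp only [map_mul]
  by_cases hi : i ∈ (bb.repr x).support
  · exact Finset.single_le_sum (fun k _ => hterm k) hi
  · rw [Finsupp.notMem_support_iff.mp hi, map_zero, zero_mul]
    exact Finset.sum_nonneg fun k _ => hterm k

theorem PosCoords.repr_map_pos {i j : ι} (hi : bb.repr x i ≠ 0)
    (hij : bb.repr (F (bb i)) j ≠ 0) : 0 < φ (bb.repr (F x) j) :=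
  (mul_pos (hx i hi) (hF i j hij)).trans_le (hx.mul_le_repr_map hF i j)

theorem PosCoords.repr_map_ne_zero {i j : ι} (hi : bb.repr x i ≠ 0)
    (hij : bb.repr (F (bb i)) j ≠ 0) : bb.repr (F x) j ≠ 0 := fun h => by
  simpa [h] using hx.repr_map_pos hF hi hij

theorem PosCoords.map : PosCoords φ bb (F x) := fun j hj => by
  obtain ⟨i, hi, hij⟩ := bb.exists_repr_ne_zero_of_repr_map_ne_zero hj
  exact hx.repr_map_pos hF hi hij

end map

end PosCoords

noncomputable def evalTwo : ℤ[T;T⁻¹] →+* ℚ :=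
  eval₂ (Int.castRingHom ℚ) (Units.mk0 2 two_ne_zero)

theorem evalTwo_T_one_sq : evalTwo (T 1 ^ 2) = 4 := by
  simp [evalTwo]; norm_num

theorem evalTwo_T_one_sq_pos : 0 < evalTwo (T 1 ^ 2) := by
  rw [evalTwo_T_one_sq]; norm_num

theorem evalTwo_T_one_sq_sub_one_pos : 0 < evalTwo (T 1 ^ 2 - 1) := by
  rw [map_sub, evalTwo_T_one_sq, map_one]; norm_num

theorem T_one_sq_ne_zero : (T 1 ^ 2 : ℤ[T;T⁻¹]) ≠ 0 :=
  ne_of_apply_ne evalTwo (by rw [map_zero]; exact evalTwo_T_one_sq_pos.ne')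

theorem T_one_sq_sub_one_ne_zero : (T 1 ^ 2 - 1 : ℤ[T;T⁻¹]) ≠ 0 :=
  ne_of_apply_ne evalTwo (by rw [map_zero]; exact evalTwo_T_one_sq_sub_one_pos.ne')

namespace CoxeterSystem

variable {B W : Type*} [Group W] {M : CoxeterMatrix B} (cs : CoxeterSystem M W)

local prefix:100 "s" => cs.simple
local prefix:100 "ℓ" => cs.length

theorem reduced_induction_left {p : W → Prop} (one : p 1)
    (mul : ∀ (w : W) (i : B), ℓ (s i * w) = ℓ w + 1 → p w → p (s i * w)) (w : W) :
    p w := by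
  induction hn : ℓ w generalizing w with
  | zero => rwa [cs.length_eq_zero_iff.mp hn]
  | succ n ih =>
    have hw : w ≠ 1 := by rintro rfl; simp at hn
    obtain ⟨i, hi⟩ := cs.exists_leftDescent_of_ne_one hw
    rw [cs.isLeftDescent_iff] at hi
    rw [← cs.simple_mul_simple_cancel_left (w := w) i]
    exact mul _ i (by rw [cs.simple_mul_simple_cancel_left]; omega) (ih _ (by omega))

variable {st : W ≃* W}

theorem length_map_le_s12 (hst_S : ∀ i : B, ∃ j : B, st (s i) = s j) (w : W) :
    ℓ (st w) ≤ ℓ w := by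
  choose f hf using hst_S
  obtain ⟨ω, hω, rfl⟩ := cs.exists_isReduced w
  have hmap : st (cs.wordProd ω) = cs.wordProd (ω.map f) := by
    simp only [wordProd, map_list_prod, List.map_map]
    exact congrArg List.prod (List.map_congr_left fun i _ => hf i)
  rw [hmap, hω.eq]
  exact (cs.length_wordProd_le _).trans (List.length_map _).le

theorem length_map (hst_inv : ∀ w, st (st w) = w) (hst_S : ∀ i : B, ∃ j : B, st (s i) = s j)
    (w : W) : ℓ (st w) = ℓ w :=
  (cs.length_map_le_s12 hst_S w).antisymm (by simpa [hst_inv] using cs.length_map_le_s12 hst_S (st w))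

theorem length_mul_map_simple (hst_inv : ∀ w, st (st w) = w)
    (hst_S : ∀ i : B, ∃ j : B, st (s i) = s j) {z : W} (hz : st z = z⁻¹) (i : B) :
    ℓ (z * st (s i)) = ℓ (s i * z) := by
  rw [← cs.length_map hst_inv hst_S (s i * z), map_mul, hz, ← cs.length_inv,
    mul_inv_rev, ← map_inv, cs.inv_simple]

theorem map_simple_mul_eq_inv {z : W} (hz : st z = z⁻¹) {i : B}
    (hcomm : s i * z = z * st (s i)) : st (s i * z) = (s i * z)⁻¹ := by
  rw [map_mul, hz, mul_inv_rev, cs.inv_simple, eq_comm, inv_mul_eq_iff_eq_mul, ← mul_assoc,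
    ← hcomm, mul_inv_cancel_right]

theorem map_simple_mul_mul_map_simple_eq_inv (hst_inv : ∀ w, st (st w) = w) {z : W}
    (hz : st z = z⁻¹) (i : B) :
    st (s i * z * st (s i)) = (s i * z * st (s i))⁻¹ := by
  rw [map_mul, map_mul, hz, hst_inv, mul_inv_rev, mul_inv_rev, ← map_inv, cs.inv_simple,
    mul_assoc]

end CoxeterSystem

section Hecke

variable {B W H : Type*} [Group W] {M : CoxeterMatrix B} (cs : CoxeterSystem M W) [Ring H]
  [Algebra ℤ[T;T⁻¹] H] {b : Module.Basis W ℤ[T;T⁻¹] H}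
  (hbmul : ∀ w w' : W, cs.length (w * w') = cs.length w + cs.length w' →
    b w * b w' = b (w * w'))
  (hb1 : b 1 = 1) (hbquad : ∀ i : B,
    (b (cs.simple i) + 1) * (b (cs.simple i) - algebraMap ℤ[T;T⁻¹] H (T 1 ^ 2)) = 0)

local prefix:100 "s" => cs.simple
local prefix:100 "ℓ" => cs.length

include hbmul

theorem basis_simple_mul_of_length_lt {i : B} {w : W} (h : ℓ (s i * w) = ℓ w + 1) :
    b (s i) * b w = b (s i * w) :=
  hbmul _ _ (by rw [h, cs.length_simple, add_comm])

theorem basis_mul_simple_of_length_lt {j : B} {w : W} (h : ℓ (w * s j) = ℓ w + 1) :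
    b w * b (s j) = b (w * s j) :=
  hbmul _ _ (by rw [h, cs.length_simple])

include hb1 hbquad

omit hbmul in
theorem basis_simple_mul_self (i : B) :
    b (s i) * b (s i) =
      (T 1 ^ 2 - 1 : ℤ[T;T⁻¹]) • b (s i) + (T 1 ^ 2 : ℤ[T;T⁻¹]) • b 1 := by
  have hcomm := Algebra.commutes (T 1 ^ 2 : ℤ[T;T⁻¹]) (b (s i))
  rw [hb1, sub_smul, one_smul, Algebra.smul_def, Algebra.smul_def, mul_one, ← sub_eq_zero,
    ← hbquad i, add_mul, mul_sub, mul_sub, hcomm]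
  noncomm_ring

theorem basis_simple_mul_of_length_gt {i : B} {w : W} (h : ℓ (s i * w) + 1 = ℓ w) :
    b (s i) * b w =
      (T 1 ^ 2 - 1 : ℤ[T;T⁻¹]) • b w + (T 1 ^ 2 : ℤ[T;T⁻¹]) • b (s i * w) := by
  have hw : b w = b (s i) * b (s i * w) := by
    rw [basis_simple_mul_of_length_lt cs hbmul (by rw [cs.simple_mul_simple_cancel_left]; omega),
      cs.simple_mul_simple_cancel_left]
  conv_lhs => rw [hw, ← mul_assoc, basis_simple_mul_self cs hb1 hbquad, add_mul, smul_mul_assoc,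
    smul_mul_assoc, ← hw, hb1, one_mul]

theorem basis_mul_simple_of_length_gt {j : B} {w : W} (h : ℓ (w * s j) + 1 = ℓ w) :
    b w * b (s j) =
      (T 1 ^ 2 - 1 : ℤ[T;T⁻¹]) • b w + (T 1 ^ 2 : ℤ[T;T⁻¹]) • b (w * s j) := by
  have hw : b w = b (w * s j) * b (s j) := by
    rw [basis_mul_simple_of_length_lt cs hbmul (by rw [cs.simple_mul_simple_cancel_right]; omega),
      cs.simple_mul_simple_cancel_right]
  conv_lhs => rw [hw, mul_assoc, basis_simple_mul_self cs hb1 hbquad, mul_add, mul_smul_comm,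
    mul_smul_comm, ← hw, hb1, mul_one]

theorem posCoords_basis_simple_mul (i : B) (w : W) : PosCoords evalTwo b (b (s i) * b w) := by
  rcases cs.length_simple_mul w i with h | h
  · rw [basis_simple_mul_of_length_lt cs hbmul h]
    exact posCoords_basis _
  · rw [basis_simple_mul_of_length_gt cs hbmul hb1 hbquad h]
    exact posCoords_smul_add_smul evalTwo_T_one_sq_sub_one_pos evalTwo_T_one_sq_pos _ _

theorem posCoords_basis_mul (x w : W) : PosCoords evalTwo b (b x * b w) := by
  induction x using cs.reduced_induction_left with
  | one => rw [hb1, one_mul]; exact posCoords_basis w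
  | mul x i h ih =>
    rw [← basis_simple_mul_of_length_lt cs hbmul h, mul_assoc]
    exact ih.map (F := LinearMap.mulLeft ℤ[T;T⁻¹] (b (s i)))
      (posCoords_basis_simple_mul cs hbmul hb1 hbquad i)

theorem posCoords_basis_mul_mul (x w v : W) : PosCoords evalTwo b (b x * b w * b v) :=
  (posCoords_basis_mul cs hbmul hb1 hbquad x w).map (F := LinearMap.mulRight ℤ[T;T⁻¹] (b v))
    (fun u => posCoords_basis_mul cs hbmul hb1 hbquad u v)

theorem repr_basis_simple_mul_apply_simple_mul_ne_zero (i : B) (w : W) :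
    b.repr (b (s i) * b w) (s i * w) ≠ 0 := by
  rcases cs.length_simple_mul w i with h | h
  · simp [basis_simple_mul_of_length_lt cs hbmul h]
  · have hne : w ≠ s i * w := fun e => by rw [← e] at h; omega
    simpa [basis_simple_mul_of_length_gt cs hbmul hb1 hbquad h, hne] using T_one_sq_ne_zero

theorem repr_basis_simple_mul_apply_self_ne_zero {i : B} {w : W} (h : ℓ (s i * w) + 1 = ℓ w) :
    b.repr (b (s i) * b w) w ≠ 0 := by
  have hne : s i * w ≠ w := fun e => by rw [e] at h; omega
  simpa [basis_simple_mul_of_length_gt cs hbmul hb1 hbquad h, hne] using T_one_sq_sub_one_ne_zero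

theorem repr_basis_mul_simple_apply_mul_simple_ne_zero (j : B) (w : W) :
    b.repr (b w * b (s j)) (w * s j) ≠ 0 := by
  rcases cs.length_mul_simple w j with h | h
  · simp [basis_mul_simple_of_length_lt cs hbmul h]
  · have hne : w ≠ w * s j := fun e => by rw [← e] at h; omega
    simpa [basis_mul_simple_of_length_gt cs hbmul hb1 hbquad h, hne] using T_one_sq_ne_zero

theorem repr_basis_mul_simple_apply_self_ne_zero {j : B} {w : W} (h : ℓ (w * s j) + 1 = ℓ w) :
    b.repr (b w * b (s j)) w ≠ 0 := by
  have hne : w * s j ≠ w := fun e => by rw [e] at h; omega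
  simpa [basis_mul_simple_of_length_gt cs hbmul hb1 hbquad h, hne] using T_one_sq_sub_one_ne_zero

theorem repr_basis_simple_mul_mul_simple_ne_zero_of_ne_zero {i j : B} {w w₁ w₂ : W}
    (h₁ : b.repr (b w * b (s j)) w₁ ≠ 0) (h₂ : b.repr (b (s i) * b w₁) w₂ ≠ 0) :
    b.repr (b (s i) * b w * b (s j)) w₂ ≠ 0 := by
  rw [mul_assoc]
  exact (posCoords_basis_mul cs hbmul hb1 hbquad w (s j)).repr_map_ne_zero
    (F := LinearMap.mulLeft ℤ[T;T⁻¹] (b (s i)))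
    (posCoords_basis_simple_mul cs hbmul hb1 hbquad i) h₁ h₂

theorem repr_basis_simple_mul_mul_simple_apply_ne_zero (i j : B) (w : W) :
    b.repr (b (s i) * b w * b (s j)) (s i * w * s j) ≠ 0 := by
  rw [mul_assoc (s i)]
  exact repr_basis_simple_mul_mul_simple_ne_zero_of_ne_zero cs hbmul hb1 hbquad
    (repr_basis_mul_simple_apply_mul_simple_ne_zero cs hbmul hb1 hbquad j w)
    (repr_basis_simple_mul_apply_simple_mul_ne_zero cs hbmul hb1 hbquad i _)

theorem repr_basis_simple_mul_mul_simple_apply_self_ne_zero {i j : B} {w : W}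
    (hi : ℓ (s i * w) + 1 = ℓ w) (hj : ℓ (w * s j) + 1 = ℓ w) :
    b.repr (b (s i) * b w * b (s j)) w ≠ 0 :=
  repr_basis_simple_mul_mul_simple_ne_zero_of_ne_zero cs hbmul hb1 hbquad
    (repr_basis_mul_simple_apply_self_ne_zero cs hbmul hb1 hbquad hj)
    (repr_basis_simple_mul_apply_self_ne_zero cs hbmul hb1 hbquad hi)

theorem repr_basis_simple_mul_mul_simple_apply_simple_mul_ne_zero {i j : B} {w : W}
    (hcomm : s i * w = w * s j) : b.repr (b (s i) * b w * b (s j)) (s i * w) ≠ 0 := by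
  rcases cs.length_simple_mul w i with h | h
  · refine repr_basis_simple_mul_mul_simple_ne_zero_of_ne_zero cs hbmul hb1 hbquad
      (repr_basis_mul_simple_apply_mul_simple_ne_zero cs hbmul hb1 hbquad j w) ?_
    rw [← hcomm]
    exact repr_basis_simple_mul_apply_self_ne_zero cs hbmul hb1 hbquad
      (by rw [cs.simple_mul_simple_cancel_left]; omega)
  · exact repr_basis_simple_mul_mul_simple_ne_zero_of_ne_zero cs hbmul hb1 hbquad
      (repr_basis_mul_simple_apply_self_ne_zero cs hbmul hb1 hbquad (by rw [← hcomm]; omega))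
      (repr_basis_simple_mul_apply_simple_mul_ne_zero cs hbmul hb1 hbquad i w)

end Hecke

section LusztigVogan

variable {B W H Mo : Type} [Group W] {M : CoxeterMatrix B} (cs : CoxeterSystem M W)
  {st : W ≃* W} (hst_inv : ∀ w, st (st w) = w)
  (hst_S : ∀ i : B, ∃ j : B, st (cs.simple i) = cs.simple j)
  [Ring H] [Algebra ℤ[T;T⁻¹] H] {b : Module.Basis W ℤ[T;T⁻¹] H}
  (hbmul : ∀ w w' : W, cs.length (w * w') = cs.length w + cs.length w' →
    b w * b w' = b (w * w'))
  (hb1 : b 1 = 1) (hbquad : ∀ i : B,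
    (b (cs.simple i) + 1) * (b (cs.simple i) - algebraMap ℤ[T;T⁻¹] H (T 1 ^ 2)) = 0)
  [AddCommGroup Mo] [Module ℤ[T;T⁻¹] Mo]
  {a : Module.Basis {w : W // st w = w⁻¹} ℤ[T;T⁻¹] Mo}

local prefix:100 "s" => cs.simple
local prefix:100 "ℓ" => cs.length

include hst_inv hst_S hbmul hb1 hbquad in
theorem LVFormulas.repr_basis_simple_mul_mul_simple_ne_zero {Ts : B → Mo →ₗ[ℤ[T;T⁻¹]] Mo}
    (hTs : LVFormulas cs st a Ts) {i j : B} (hj : st (s i) = s j)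
    {z z₂ : {w : W // st w = w⁻¹}} (h : a.repr (Ts i (a z)) z₂ ≠ 0) :
    b.repr (b (s i) * b z * b (s j)) z₂ ≠ 0 := by
  obtain ⟨lv1, lv2, lv3, lv4⟩ := hTs i z
  by_cases hcomm : s i * z = z * st (s i)
  · have htw := cs.map_simple_mul_eq_inv z.2 hcomm
    have hz₂ : z = z₂ ∨ ⟨s i * z, htw⟩ = z₂ := by
      rcases cs.length_simple_mul z i with hl | hl
      · rw [lv1 hcomm (by omega) htw] at h
        exact a.eq_or_eq_of_repr_smul_add_smul_ne_zero h
      · rw [lv2 hcomm (by omega) htw] at h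
        exact a.eq_or_eq_of_repr_smul_add_smul_ne_zero h
    rw [hj] at hcomm
    rcases hz₂ with rfl | rfl
    -- here `s z t = z`
    · simpa [hcomm] using repr_basis_simple_mul_mul_simple_apply_ne_zero cs hbmul hb1 hbquad i j z
    · exact repr_basis_simple_mul_mul_simple_apply_simple_mul_ne_zero cs hbmul hb1 hbquad hcomm
  · have htw := cs.map_simple_mul_mul_map_simple_eq_inv hst_inv z.2 i
    rcases cs.length_simple_mul z i with hl | hl
    · rw [lv3 hcomm (by omega) htw] at h
      obtain rfl := a.eq_of_repr_self_ne_zero h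
      simpa [hj] using repr_basis_simple_mul_mul_simple_apply_ne_zero cs hbmul hb1 hbquad i j z
    · rw [lv4 hcomm (by omega) htw] at h
      rcases a.eq_or_eq_of_repr_smul_add_smul_ne_zero h with rfl | rfl
      · refine repr_basis_simple_mul_mul_simple_apply_self_ne_zero cs hbmul hb1 hbquad hl ?_
        rwa [← hj, cs.length_mul_map_simple hst_inv hst_S z.2]
      · simpa [hj] using repr_basis_simple_mul_mul_simple_apply_ne_zero cs hbmul hb1 hbquad i j z

include hst_inv hst_S hbmul in
theorem basis_mul_basis_map_inv_simple_mul {i j : B} (hj : st (s i) = s j) {y : W}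
    (h : ℓ (s i * y) = ℓ y + 1) :
    b (s i * y) * b (st (s i * y))⁻¹ = b (s i) * (b y * b (st y)⁻¹) * b (s j) := by
  have hinv : (st (s i * y))⁻¹ = (st y)⁻¹ * s j := by
    rw [map_mul, hj, mul_inv_rev, cs.inv_simple]
  have hlen : ℓ ((st y)⁻¹ * s j) = ℓ (st y)⁻¹ + 1 := by
    rw [← hinv]
    simp only [cs.length_inv, cs.length_map hst_inv hst_S, h]
  rw [← basis_simple_mul_of_length_lt cs hbmul h, hinv,
    ← basis_mul_simple_of_length_lt cs hbmul hlen, mul_assoc, mul_assoc, mul_assoc]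

end LusztigVogan

theorem statement12_general {B W : Type} [Group W] {M : CoxeterMatrix B}
    (cs : CoxeterSystem M W) (st : W ≃* W)
    (hst_inv : ∀ w, st (st w) = w)
    (hst_S : ∀ i : B, ∃ j : B, st (cs.simple i) = cs.simple j)
    (H : Type) [Ring H] [Algebra (LaurentPolynomial ℤ) H]
    (b : Module.Basis W (LaurentPolynomial ℤ) H)
    (hb1 : b 1 = 1)
    (hbmul : ∀ w w' : W, cs.length (w * w') = cs.length w + cs.length w' →
      b w * b w' = b (w * w'))
    (hbquad : ∀ i : B,
      (b (cs.simple i) + 1) * (b (cs.simple i) - algebraMap (LaurentPolynomial ℤ) H (T 1 ^ 2)) = 0)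
    (Mo : Type) [AddCommGroup Mo] [Module (LaurentPolynomial ℤ) Mo]
    (a : Module.Basis {w : W // st w = w⁻¹} (LaurentPolynomial ℤ) Mo)
    (Tact : W → (Mo →ₗ[LaurentPolynomial ℤ] Mo))
    (hTact1 : Tact 1 = LinearMap.id)
    (hTactmul : ∀ w w' : W, cs.length (w * w') = cs.length w + cs.length w' →
      Tact (w * w') = (Tact w) ∘ₗ (Tact w'))
    (hTacts : LVFormulas cs st a (fun i => Tact (cs.simple i)))
    (h1 : st (1 : W) = (1 : W)⁻¹) :
    ∀ (z : {w : W // st w = w⁻¹}) (y : W),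
      a.repr (Tact y (a ⟨1, h1⟩)) z ≠ 0 →
      b.repr (b y * b ((st y)⁻¹)) z.1 ≠ 0 := by
  intro z y
  induction y using cs.reduced_induction_left generalizing z with
  | one =>
    intro hz
    rw [hTact1, LinearMap.id_apply] at hz
    obtain rfl := a.eq_of_repr_self_ne_zero hz
    rw [h1, inv_inv, hb1, mul_one, ← hb1]
    simp
  | mul y i hlen ih =>
    intro hz
    obtain ⟨j, hj⟩ := hst_S i
    rw [hTactmul _ _ (by rw [cs.length_simple, hlen, add_comm]), LinearMap.comp_apply] at hz
    obtain ⟨z₁, hz₁, hstep⟩ := a.exists_repr_ne_zero_of_repr_map_ne_zero hz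
    rw [basis_mul_basis_map_inv_simple_mul cs hst_inv hst_S hbmul hj hlen]
    exact (posCoords_basis_mul cs hbmul hb1 hbquad y (st y)⁻¹).repr_map_ne_zero
      (F := LinearMap.mulLeftRight ℤ[T;T⁻¹] (b (cs.simple i), b (cs.simple j)))
      (fun w => posCoords_basis_mul_mul cs hbmul hb1 hbquad _ w _) (ih z₁ hz₁)
      (hTacts.repr_basis_simple_mul_mul_simple_ne_zero cs hst_inv hst_S hbmul hb1 hbquad hj hstep)

/-- **Proposition 1.7.** Write `T_y a_1 = Σ_z c^z_y a_z` in the Lusztig–Vogan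
module and expand `T_y T_{(y*)⁻¹}` in the basis `(T_w)` of the Hecke algebra.  For any twisted
involution `z` and `y ∈ W`, if `c^z_y ≠ 0` then the coefficient of `T_z` in `T_y T_{(y*)⁻¹}`
is nonzero. -/
theorem statement12 {B W : Type} [Group W] [Finite B] {M : CoxeterMatrix B}
    (cs : CoxeterSystem M W) (st : W ≃* W)
    (hst_inv : ∀ w, st (st w) = w)
    (hst_S : ∀ i : B, ∃ j : B, st (cs.simple i) = cs.simple j)
    (H : Type) [Ring H] [Algebra (LaurentPolynomial ℤ) H]
    (b : Module.Basis W (LaurentPolynomial ℤ) H)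
    (hb1 : b 1 = 1)
    (hbmul : ∀ w w' : W, cs.length (w * w') = cs.length w + cs.length w' →
      b w * b w' = b (w * w'))
    (hbquad : ∀ i : B,
      (b (cs.simple i) + 1) * (b (cs.simple i) - algebraMap (LaurentPolynomial ℤ) H (T 1 ^ 2)) = 0)
    (Mo : Type) [AddCommGroup Mo] [Module (LaurentPolynomial ℤ) Mo]
    (a : Module.Basis {w : W // st w = w⁻¹} (LaurentPolynomial ℤ) Mo)
    (Tact : W → (Mo →ₗ[LaurentPolynomial ℤ] Mo))
    (hTact1 : Tact 1 = LinearMap.id)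
    (hTactmul : ∀ w w' : W, cs.length (w * w') = cs.length w + cs.length w' →
      Tact (w * w') = (Tact w) ∘ₗ (Tact w'))
    (hTacts : LVFormulas cs st a (fun i => Tact (cs.simple i)))
    (h1 : st (1 : W) = (1 : W)⁻¹) :
    ∀ (z : {w : W // st w = w⁻¹}) (y : W),
      a.repr (Tact y (a ⟨1, h1⟩)) z ≠ 0 →
      b.repr (b y * b ((st y)⁻¹)) z.1 ≠ 0 :=
  statement12_general cs st hst_inv hst_S H b hb1 hbmul hbquad Mo a Tact hTact1 hTactmul hTacts h1
end
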